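/- Let L₀ be the lattice in ℝ⁴ generated by ℤ⁴ together with (1/2,1/2,0,0), (0,0,1/2,1/2), (1/4,1/4,1/4,1/4), and (1/4,−1/4,0,1/2). Then the number of vectors in L₀ of ℓ¹-norm exactly 1 equals 36. -/

import Mathlib

/-!
Every generator of `L₀` lies in `¼ℤ⁴`, and `L₀ = ¼ · M` for the index-16 sublattice
`M = {m ∈ ℤ⁴ : m₀ + m₁ + 2m₃ ≡ 2m₁ + m₂ + m₃ ≡ 0 (mod 4)}` of `ℤ⁴`. Hence the vectors of
`L₀` of `ℓ¹`-norm `1` are the `m / 4` with `m ∈ M` and `‖m‖₁ = 4`; these lie in the box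
`[-4, 4]⁴`, where an exhaustive check finds exactly 36 of them.
-/

def l1 {n : ℕ} (x : Fin n → ℝ) : ℝ := ∑ i, |x i|

/-- Integer vectors in `ℝ⁴`. -/
def Zlat4 : Set (Fin 4 → ℝ) := {x | ∀ i, ∃ m : ℤ, x i = (m : ℝ)}

/-- The lattice `L₀` generated by `ℤ⁴`, `(1/2,1/2,0,0)`, `(0,0,1/2,1/2)`,
`(1/4,1/4,1/4,1/4)` and `(1/4,-1/4,0,1/2)`. -/
def L0 : AddSubgroup (Fin 4 → ℝ) :=
  AddSubgroup.closure (Zlat4 ∪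
    {![1/2, 1/2, 0, 0], ![0, 0, 1/2, 1/2], ![1/4, 1/4, 1/4, 1/4], ![1/4, -1/4, 0, 1/2]})

noncomputable def quarter : (Fin 4 → ℤ) →+ (Fin 4 → ℝ) :=
  AddMonoidHom.mk' (fun m i => (m i : ℝ) / 4) fun m m' => by ext; simp [add_div]

lemma quarter_apply (m : Fin 4 → ℤ) (i : Fin 4) : quarter m i = (m i : ℝ) / 4 := rfl

lemma quarter_injective : Function.Injective quarter := fun m m' h => by
  ext i
  simpa only [quarter_apply, div_left_inj' (four_ne_zero' ℝ), Int.cast_inj] using congrFun h i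

lemma l1_quarter (m : Fin 4 → ℤ) : l1 (quarter m) = ((∑ i, |m i| : ℤ) : ℝ) / 4 := by
  simp [l1, quarter_apply, abs_div, Finset.sum_div]

def L0Coords : AddSubgroup (Fin 4 → ℤ) where
  carrier := {m | 4 ∣ m 0 + m 1 + 2 * m 3 ∧ 4 ∣ 2 * m 1 + m 2 + m 3}
  zero_mem' := by simp
  add_mem' := by
    rintro m m' ⟨h₁, h₂⟩ ⟨h₁', h₂'⟩
    simp only [Set.mem_ofPred_eq, Pi.add_apply]
    omega
  neg_mem' := by
    rintro m ⟨h₁, h₂⟩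
    simp only [Set.mem_ofPred_eq, Pi.neg_apply]
    omega

instance : DecidablePred (· ∈ L0Coords) := fun m =>
  inferInstanceAs (Decidable (4 ∣ m 0 + m 1 + 2 * m 3 ∧ 4 ∣ 2 * m 1 + m 2 + m 3))

lemma L0_le_map_quarter : L0 ≤ L0Coords.map quarter := by
  rw [L0, AddSubgroup.closure_le]
  rintro x (hx | hx)
  · choose k hk using hx
    refine ⟨4 • k, ⟨⟨k 0 + k 1 + 2 * k 3, ?_⟩, ⟨2 * k 1 + k 2 + k 3, ?_⟩⟩, ?_⟩
    · simp only [Pi.smul_apply]; ring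
    · simp only [Pi.smul_apply]; ring
    · ext i; simp [quarter_apply, hk i]
  · simp only [Set.mem_insert_iff, Set.mem_singleton_iff] at hx
    rcases hx with rfl | rfl | rfl | rfl
    · refine ⟨![2, 2, 0, 0], ⟨by decide, by decide⟩, ?_⟩
      ext i; fin_cases i <;> norm_num [quarter_apply]
    · refine ⟨![0, 0, 2, 2], ⟨by decide, by decide⟩, ?_⟩
      ext i; fin_cases i <;> norm_num [quarter_apply]
    · refine ⟨![1, 1, 1, 1], ⟨by decide, by decide⟩, ?_⟩
      ext i; fin_cases i <;> norm_num [quarter_apply]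
    · refine ⟨![1, -1, 0, 2], ⟨by decide, by decide⟩, ?_⟩
      ext i; fin_cases i <;> norm_num [quarter_apply]

lemma map_quarter_le_L0 : L0Coords.map quarter ≤ L0 := by
  rw [AddSubgroup.map_le_iff_le_comap]
  rintro m ⟨h₁, h₂⟩
  rw [AddSubgroup.mem_comap]
  have hu : ![1/4, 1/4, 1/4, 1/4] ∈ L0 := AddSubgroup.subset_closure (Or.inr (by simp))
  have hv : ![1/4, -1/4, 0, 1/2] ∈ L0 := AddSubgroup.subset_closure (Or.inr (by simp))
  have hw : ![0, 0, 1/2, 1/2] ∈ L0 := AddSubgroup.subset_closure (Or.inr (by simp))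
  have he₃ : ![0, 0, 0, (1 : ℝ)] ∈ L0 := AddSubgroup.subset_closure <| Or.inl fun i => by
    fin_cases i
    exacts [⟨0, by simp⟩, ⟨0, by simp⟩, ⟨0, by simp⟩, ⟨1, by simp⟩]
  -- the coordinates of `m` in the basis `4u, 4(u - v), 4w, 4e₃` of `L0Coords`
  obtain ⟨a, b, c, d, rfl⟩ :
      ∃ a b c d : ℤ, m = ![a, a + 2 * b, a + b + 2 * c, a - b + 2 * c + 4 * d] :=
    ⟨m 0, (m 1 - m 0) / 2, (2 * m 2 - m 0 - m 1) / 4,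
      (m 3 - m 0 + (m 1 - m 0) / 2 - (2 * m 2 - m 0 - m 1) / 2) / 4, by
        ext i; fin_cases i <;> simp <;> omega⟩
  convert add_mem (add_mem (add_mem (zsmul_mem hu a) (zsmul_mem (sub_mem hu hv) b))
    (zsmul_mem hw c)) (zsmul_mem he₃ d) using 1
  ext i
  fin_cases i <;> simp [quarter_apply] <;> ring

lemma L0_eq_map_quarter : L0 = L0Coords.map quarter :=
  le_antisymm L0_le_map_quarter map_quarter_le_L0

lemma mem_Icc_of_sum_abs_eq {n : ℕ} {m : Fin n → ℤ} {k : ℤ} (h : ∑ i, |m i| = k) (i : Fin n) :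
    m i ∈ Finset.Icc (-k) k := by
  have := Finset.single_le_sum (f := fun i => |m i|) (fun i _ => abs_nonneg (m i))
    (Finset.mem_univ i)
  rw [Finset.mem_Icc, ← abs_le]
  omega

set_option maxRecDepth 10000 in
lemma card_L0Coords_sum_abs_eq_four :
    ((Fintype.piFinset fun _ : Fin 4 => Finset.Icc (-4 : ℤ) 4).filter
      fun m => m ∈ L0Coords ∧ ∑ i, |m i| = 4).card = 36 := by
  decide

lemma setOf_mem_L0_l1_eq_one : {x : Fin 4 → ℝ | x ∈ L0 ∧ l1 x = 1} =
    quarter '' ↑((Fintype.piFinset fun _ : Fin 4 => Finset.Icc (-4 : ℤ) 4).filter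
      fun m => m ∈ L0Coords ∧ ∑ i, |m i| = 4) := by
  ext x
  simp only [L0_eq_map_quarter, AddSubgroup.mem_map, Set.mem_ofPred_eq, Finset.coe_filter,
    Fintype.mem_piFinset, Set.mem_image]
  constructor
  · rintro ⟨⟨m, hm, rfl⟩, hl⟩
    have hsum : ∑ i, |m i| = 4 := by
      rw [l1_quarter] at hl
      exact_mod_cast (div_eq_one_iff_eq (four_ne_zero' ℝ)).mp hl
    exact ⟨m, ⟨mem_Icc_of_sum_abs_eq hsum, hm, hsum⟩, rfl⟩
  · rintro ⟨m, ⟨-, hm, hsum⟩, rfl⟩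
    refine ⟨⟨m, hm, rfl⟩, ?_⟩
    rw [l1_quarter, hsum]
    norm_num

theorem stmt12 : Set.ncard {x : Fin 4 → ℝ | x ∈ L0 ∧ l1 x = 1} = 36 := by
  rw [setOf_mem_L0_l1_eq_one, Set.ncard_image_of_injective _ quarter_injective,
    Set.ncard_coe_finset, card_L0Coords_sum_abs_eq_four]
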